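/- Let p and q be co-prime positive integers. Then there exists M(p,q) ∈ ℕ such that for all co-prime positive integers p', q' with p' > M(p,q), q' > M(p,q) and pq dividing p'q', and for all faithful diffuse probability Radon measures τ and σ on [0,1], there exists an injective unital *-homomorphism φ : Z_{p,q} → Z_{p',q'} with ∫ tr(φ(f)(t)) dσ(t) = ∫ tr(f(t)) dτ(t) for all f ∈ Z_{p,q}. -/

import Mathlib

open MeasureTheory
open scoped ENNReal

noncomputable section

/-- The unit interval `[0,1]` as a type. -/
abbrev 𝕀 : Type := unitInterval

/-- A measure on `[0,1]` is *faithful* if it assigns positive measure to every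
nonempty (relatively) open subset. -/
def Faithful (μ : Measure 𝕀) : Prop :=
  ∀ U : Set 𝕀, IsOpen U → U.Nonempty → 0 < μ U

/-- A measure on `[0,1]` is *diffuse* (atomless) if every singleton has measure zero. -/
def Diffuse (μ : Measure 𝕀) : Prop :=
  ∀ t : 𝕀, μ {t} = 0

open scoped Matrix.Norms.L2Operator ComplexOrder

/-- `n × n` complex matrices. -/
abbrev Mat (n : ℕ) : Type := Matrix (Fin n) (Fin n) ℂ

/-- The C*-algebra `𝔸 n = C([0,1], Mₙ(ℂ))` of continuous matrix-valued functions. -/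
abbrev 𝔸 (n : ℕ) : Type := C(𝕀, Mat n)

/-- The tracial state on `𝔸 n` induced by the measure `μ` on `[0,1]`:
`f ↦ ∫ tr(f t) dμ(t)`, where `tr` is the normalized trace on `Mₙ(ℂ)`. -/
def trInt (n : ℕ) (μ : Measure 𝕀) (f : 𝔸 n) : ℂ :=
  ∫ t, (f t).trace / (n : ℂ) ∂μ

open scoped Kronecker

/-- Evaluation at a point, as a star algebra homomorphism `𝔸 n →⋆ₐ[ℂ] Mat n`. -/
def evalHom (n : ℕ) (t : 𝕀) : 𝔸 n →⋆ₐ[ℂ] Mat n :=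
  { toFun := fun f => f t
    map_one' := rfl
    map_mul' := fun _ _ => rfl
    map_zero' := rfl
    map_add' := fun _ _ => rfl
    commutes' := fun _ => rfl
    map_star' := fun _ => rfl }

/-- `a ↦ a ⊗ 1`, with indices identified via `finProdFinEquiv : Fin p × Fin q ≃ Fin (p*q)`. -/
def lKronFun (p q : ℕ) (a : Mat p) : Mat (p * q) :=
  (a ⊗ₖ (1 : Mat q)).submatrix (⇑finProdFinEquiv.symm) (⇑finProdFinEquiv.symm)

/-- `b ↦ 1 ⊗ b`, with indices identified via `finProdFinEquiv : Fin p × Fin q ≃ Fin (p*q)`. -/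
def rKronFun (p q : ℕ) (b : Mat q) : Mat (p * q) :=
  ((1 : Mat p) ⊗ₖ b).submatrix (⇑finProdFinEquiv.symm) (⇑finProdFinEquiv.symm)

lemma lKronFun_one (p q : ℕ) : lKronFun p q 1 = 1 := by
  unfold lKronFun; rw [Matrix.one_kronecker_one, Matrix.submatrix_one_equiv]

lemma rKronFun_one (p q : ℕ) : rKronFun p q 1 = 1 := by
  unfold rKronFun; rw [Matrix.one_kronecker_one, Matrix.submatrix_one_equiv]

lemma lKronFun_mul (p q : ℕ) (a b : Mat p) :
    lKronFun p q (a * b) = lKronFun p q a * lKronFun p q b := by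
  unfold lKronFun
  rw [Matrix.submatrix_mul_equiv _ _ _ finProdFinEquiv.symm _, ← Matrix.mul_kronecker_mul,
    one_mul]

lemma rKronFun_mul (p q : ℕ) (a b : Mat q) :
    rKronFun p q (a * b) = rKronFun p q a * rKronFun p q b := by
  unfold rKronFun
  rw [Matrix.submatrix_mul_equiv _ _ _ finProdFinEquiv.symm _, ← Matrix.mul_kronecker_mul,
    one_mul]

lemma lKronFun_add (p q : ℕ) (a b : Mat p) :
    lKronFun p q (a + b) = lKronFun p q a + lKronFun p q b := by
  unfold lKronFun; rw [Matrix.add_kronecker, Matrix.submatrix_add]; rfl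

lemma rKronFun_add (p q : ℕ) (a b : Mat q) :
    rKronFun p q (a + b) = rKronFun p q a + rKronFun p q b := by
  unfold rKronFun; rw [Matrix.kronecker_add, Matrix.submatrix_add]; rfl

lemma lKronFun_smul (p q : ℕ) (c : ℂ) (a : Mat p) :
    lKronFun p q (c • a) = c • lKronFun p q a := by
  unfold lKronFun; rw [Matrix.smul_kronecker, Matrix.submatrix_smul]; rfl

lemma rKronFun_smul (p q : ℕ) (c : ℂ) (b : Mat q) :
    rKronFun p q (c • b) = c • rKronFun p q b := by
  unfold rKronFun; rw [Matrix.kronecker_smul, Matrix.submatrix_smul]; rfl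

lemma lKronFun_star (p q : ℕ) (a : Mat p) :
    lKronFun p q (star a) = star (lKronFun p q a) := by
  ext x y
  simp [lKronFun, Matrix.submatrix_apply, Matrix.star_apply, Matrix.kroneckerMap_apply,
    Matrix.one_apply, star_mul', apply_ite, eq_comm]
  split_ifs with h <;> tauto

lemma rKronFun_star (p q : ℕ) (b : Mat q) :
    rKronFun p q (star b) = star (rKronFun p q b) := by
  ext x y
  simp [rKronFun, Matrix.submatrix_apply, Matrix.star_apply, Matrix.kroneckerMap_apply,
    Matrix.one_apply, star_mul', apply_ite, eq_comm]
  split_ifs with h <;> tauto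

/-- The unital star-algebra embedding `M_p(ℂ) → M_{pq}(ℂ)`, `a ↦ a ⊗ 1`. -/
def lKron (p q : ℕ) : Mat p →⋆ₐ[ℂ] Mat (p * q) :=
  { toFun := lKronFun p q
    map_one' := lKronFun_one p q
    map_mul' := lKronFun_mul p q
    map_zero' := by
      show lKronFun p q 0 = 0
      have := lKronFun_smul p q 0 1; simpa using this
    map_add' := lKronFun_add p q
    commutes' := fun c => by
      show lKronFun p q (algebraMap ℂ (Mat p) c) = algebraMap ℂ (Mat (p * q)) c
      rw [Algebra.algebraMap_eq_smul_one, Algebra.algebraMap_eq_smul_one,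
        lKronFun_smul, lKronFun_one]
    map_star' := fun a => by
      show lKronFun p q (star a) = star (lKronFun p q a)
      exact lKronFun_star p q a }

/-- The unital star-algebra embedding `M_q(ℂ) → M_{pq}(ℂ)`, `b ↦ 1 ⊗ b`. -/
def rKron (p q : ℕ) : Mat q →⋆ₐ[ℂ] Mat (p * q) :=
  { toFun := rKronFun p q
    map_one' := rKronFun_one p q
    map_mul' := rKronFun_mul p q
    map_zero' := by
      show rKronFun p q 0 = 0
      have := rKronFun_smul p q 0 1; simpa using this
    map_add' := rKronFun_add p q
    commutes' := fun c => by
      show rKronFun p q (algebraMap ℂ (Mat q) c) = algebraMap ℂ (Mat (p * q)) c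
      rw [Algebra.algebraMap_eq_smul_one, Algebra.algebraMap_eq_smul_one,
        rKronFun_smul, rKronFun_one]
    map_star' := fun b => by
      show rKronFun p q (star b) = star (rKronFun p q b)
      exact rKronFun_star p q b }

/-- The dimension drop algebra `Z_{p,q}`: the star subalgebra of `C([0,1], M_{pq}(ℂ))`
consisting of those `f` with `f 0 ∈ M_p(ℂ) ⊗ 1` and `f 1 ∈ 1 ⊗ M_q(ℂ)`. -/
def Zpq (p q : ℕ) : StarSubalgebra ℂ (𝔸 (p * q)) :=
  ((lKron p q).range.comap (evalHom (p * q) 0)) ⊓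
    ((rKron p q).range.comap (evalHom (p * q) 1))

/-- `mult k ξ s t` is the number of indices `i` with `ξ i s = t`. -/
def mult (k : ℕ) (ξ : Fin k → C(𝕀, 𝕀)) (s t : 𝕀) : ℕ :=
  Set.ncard {i : Fin k | ξ i s = t}

/-!
Write `p'q' = pqk`. The embedding sends `f` to `t ↦ u t · diag (f (ξ₁ t), …, f (ξₖ t)) · (u t)⋆`.
Each `ξᵢ : [0,1] → [0,1]` is continuous, pushes `σ` forward to `τ`, and sends `0` and `1` into
`{0, 1}`, so that at either endpoint every block is a copy of `f 0 ∈ M_p ⊗ 1` or of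
`f 1 ∈ 1 ⊗ M_q`. A Bezout argument (this is where `p', q' > pq` enters) chooses how many blocks of
each kind occur so that, after a permutation of the basis, the block diagonal matrix lies in
`M_{p'} ⊗ 1` at `0` and in `1 ⊗ M_{q'}` at `1`. The two permutations are reconciled by a path of
unitaries `u` from `1` to a permutation matrix; it exists because transposition matrices are
self-adjoint unitaries, and these are joined to `1`.

The maps `ξᵢ` are `G⁻¹ ∘ ψ ∘ F`, where `F` and `G` are the distribution functions of `σ` and `τ`,
homeomorphisms of `[0,1]` because the measures are faithful and diffuse, and `ψ` is one of the
Lebesgue-measure-preserving maps `t`, `1 - t`, `|2t - 1|`, `1 - |2t - 1|`. As the `ξᵢ` are measure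
preserving, the trace is preserved.
-/

theorem Nat.exists_add_eq_dvd_mul {p q k d : ℕ} (hpq : p.Coprime q) (hd : d ∣ p * q * k)
    (hdk : d ≤ k) (hd0 : 0 < d) : ∃ a b, a + b = k ∧ d ∣ a * q ∧ d ∣ b * p := by
  have : NeZero d := ⟨hd0.ne'⟩
  have hpqk : ((p * q * k : ℕ) : ZMod d) = 0 := (ZMod.natCast_eq_zero_iff _ _).2 hd
  have hbezout : (p * Nat.gcdA p q + q * Nat.gcdB p q : ℤ) = 1 := by
    rw [← Nat.gcd_eq_gcd_ab, hpq, Nat.cast_one]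
  replace hbezout := congrArg (Int.cast : ℤ → ZMod d) hbezout
  push_cast at hbezout
  -- with `p x + q y = 1`, any `a ≡ k p x (mod d)` works
  set a := ((k * p * Nat.gcdA p q : ℤ) : ZMod d).val
  have ha : (a : ZMod d) = k * p * Nat.gcdA p q := by simp [a]
  have had : a < d := ZMod.val_lt _
  refine ⟨a, k - a, by omega, ?_, ?_⟩ <;> rw [← ZMod.natCast_eq_zero_iff]
  · push_cast at hpqk ⊢
    linear_combination (Nat.gcdA p q : ZMod d) * hpqk + q * ha
  · push_cast [Nat.cast_sub (had.le.trans hdk)] at hpqk ⊢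
    linear_combination (Nat.gcdB p q : ZMod d) * hpqk - p * ha - k * p * hbezout

theorem exists_block_multiplicities {p q k d d' : ℕ} (hpq : p.Coprime q)
    (hk : d' * d = p * q * k) (hdk : d ≤ k) (hd : 0 < d) :
    ∃ a b m n, a + b = k ∧ q * a = m * d ∧ p * b = n * d ∧ p * m + q * n = d' := by
  obtain ⟨a, b, hab, ⟨m, hm⟩, ⟨n, hn⟩⟩ := Nat.exists_add_eq_dvd_mul hpq (hk ▸ dvd_mul_left d d')
    hdk hd
  refine ⟨a, b, m, n, hab, by linarith, by linarith, Nat.eq_of_mul_eq_mul_right hd ?_⟩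
  calc (p * m + q * n) * d = p * (a * q) + q * (b * p) := by rw [hm, hn]; ring
    _ = d' * d := by rw [hk, ← hab]; ring

section Reindex

open Matrix

variable {R : Type*} [Semiring R] {P Q : Type*}

def dilateSum (x : Matrix P P R) (y : Matrix Q Q R) (S T : Type*) [DecidableEq S]
    [DecidableEq T] : Matrix ((P × S) ⊕ (Q × T)) ((P × S) ⊕ (Q × T)) R :=
  fromBlocks (x ⊗ₖ (1 : Matrix S S R)) 0 0 (y ⊗ₖ (1 : Matrix T T R))

theorem dilateSum_submatrix_congr {S T S' T' : Type*} [DecidableEq S] [DecidableEq T]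
    [DecidableEq S'] [DecidableEq T'] (x : Matrix P P R) (y : Matrix Q Q R) (eS : S' ≃ S)
    (eT : T' ≃ T) :
    (dilateSum x y S T).submatrix
        ((Equiv.prodCongr (Equiv.refl P) eS).sumCongr (Equiv.prodCongr (Equiv.refl Q) eT))
        ((Equiv.prodCongr (Equiv.refl P) eS).sumCongr (Equiv.prodCongr (Equiv.refl Q) eT)) =
      dilateSum x y S' T' := by
  ext (⟨i, s⟩ | ⟨i, s⟩) (⟨j, t⟩ | ⟨j, t⟩) <;> simp [dilateSum, one_apply]

def sortBlocks (P Q : Type*) {K : Type*} (c : K → Prop) [DecidablePred c] :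
    (P × (Q × {k // c k})) ⊕ (Q × (P × {k // ¬ c k})) ≃ (P × Q) × K :=
  ((Equiv.prodAssoc P Q _).symm.sumCongr
    ((Equiv.prodAssoc Q P _).symm.trans ((Equiv.prodComm Q P).prodCongr (Equiv.refl _)))).trans
  ((Equiv.prodSumDistrib (P × Q) _ _).symm.trans ((Equiv.refl _).prodCongr (Equiv.sumCompl c)))

theorem blockDiagonal_ite_submatrix_sortBlocks [DecidableEq P] [DecidableEq Q] {K : Type*}
    [DecidableEq K] (c : K → Prop) [DecidablePred c] (x : Matrix P P R) (y : Matrix Q Q R) :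
    (blockDiagonal fun k =>
        if c k then x ⊗ₖ (1 : Matrix Q Q R) else (1 : Matrix P P R) ⊗ₖ y).submatrix
        (sortBlocks P Q c) (sortBlocks P Q c) =
      dilateSum x y (Q × {k // c k}) (P × {k // ¬ c k}) := by
  ext (⟨i, s, k, hk⟩ | ⟨i, s, k, hk⟩) (⟨j, t, l, hl⟩ | ⟨j, t, l, hl⟩) <;>
    simp [dilateSum, sortBlocks, blockDiagonal_apply, one_apply] <;> aesop

def distribProd (P Q M N V : Type*) :
    ((P × M) ⊕ (Q × N)) × V ≃ (P × (M × V)) ⊕ (Q × (N × V)) :=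
  (Equiv.sumProdDistrib _ _ V).trans ((Equiv.prodAssoc P M V).sumCongr (Equiv.prodAssoc Q N V))

theorem dilateSum_submatrix_distribProd {M N V : Type*} [DecidableEq M] [DecidableEq N]
    [DecidableEq V] (x : Matrix P P R) (y : Matrix Q Q R) :
    (dilateSum x y (M × V) (N × V)).submatrix (distribProd P Q M N V) (distribProd P Q M N V) =
      dilateSum x y M N ⊗ₖ (1 : Matrix V V R) := by
  ext ⟨⟨i, s⟩ | ⟨i, s⟩, v⟩ ⟨⟨j, t⟩ | ⟨j, t⟩, w⟩ <;>
    simp [dilateSum, distribProd, one_apply] <;> aesop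

theorem exists_equiv_blockDiagonal_submatrix_eq_kronecker_one [DecidableEq P] [DecidableEq Q]
    {K M N P' V : Type*} [DecidableEq K] [DecidableEq M] [DecidableEq N] [DecidableEq V] (c : K → Prop)
    [DecidablePred c] (eA : Q × {k // c k} ≃ M × V) (eB : P × {k // ¬ c k} ≃ N × V)
    (E : (P × M) ⊕ (Q × N) ≃ P') :
    ∃ Θ : P' × V ≃ (P × Q) × K, ∀ (x : Matrix P P R) (y : Matrix Q Q R),
      (blockDiagonal fun k =>
          if c k then x ⊗ₖ (1 : Matrix Q Q R) else (1 : Matrix P P R) ⊗ₖ y).submatrix Θ Θ =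
        (dilateSum x y M N).submatrix E.symm E.symm ⊗ₖ (1 : Matrix V V R) := by
  refine ⟨(E.symm.prodCongr (Equiv.refl V)).trans ((distribProd P Q M N V).trans
    ((((Equiv.refl P).prodCongr eA.symm).sumCongr ((Equiv.refl Q).prodCongr eB.symm)).trans
      (sortBlocks P Q c))), fun x y => ?_⟩
  simp only [Equiv.coe_trans, ← submatrix_submatrix, blockDiagonal_ite_submatrix_sortBlocks,
    dilateSum_submatrix_congr, dilateSum_submatrix_distribProd]
  rfl

theorem kronecker_one_submatrix_prodComm {V : Type*} [DecidableEq V] (ρ : Matrix Q Q R) :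
    (ρ ⊗ₖ (1 : Matrix V V R)).submatrix (Equiv.prodComm V Q) (Equiv.prodComm V Q) =
      (1 : Matrix V V R) ⊗ₖ ρ := by
  ext ⟨v, i⟩ ⟨w, j⟩
  simp [one_apply]

theorem blockDiagonal_ite_lKron_rKron {p q k : ℕ} (c : Fin k → Prop) [DecidablePred c]
    (x : Mat p) (y : Mat q) :
    (blockDiagonal fun i => if c i then lKron p q x else rKron p q y) =
      (blockDiagonal fun i => if c i then x ⊗ₖ (1 : Mat q) else (1 : Mat p) ⊗ₖ y).submatrix
        (Prod.map finProdFinEquiv.symm id) (Prod.map finProdFinEquiv.symm id) := by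
  ext ⟨a, i⟩ ⟨b, j⟩
  by_cases hc : c i <;> simp [blockDiagonal_apply, hc, lKron, lKronFun, rKron, rKronFun]

theorem exists_blockDiagonal_lKron_rKron_eq_kronecker_one {p q k d d' : ℕ} (hpq : p.Coprime q)
    (hk : d' * d = p * q * k) (hdk : d ≤ k) (hd : 0 < d) :
    ∃ (a : ℕ) (Θ : Fin d' × Fin d ≃ Fin (p * q) × Fin k) (ρ : Mat p → Mat q → Mat d'), ∀ x y,
      (blockDiagonal fun i : Fin k => if (i : ℕ) < a then lKron p q x else rKron p q y).submatrix
        Θ Θ = ρ x y ⊗ₖ (1 : Mat d) := by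
  obtain ⟨a, b, m, n, hab, hm, hn, hd'⟩ := exists_block_multiplicities hpq hk hdk hd
  have hA : Fintype.card {i : Fin k // (i : ℕ) < a} = a := Fintype.card_fin_lt_of_le (by omega)
  have hB : Fintype.card {i : Fin k // ¬ (i : ℕ) < a} = b := by
    rw [Fintype.card_subtype_compl, hA, Fintype.card_fin]; omega
  set E := ((finProdFinEquiv.sumCongr finProdFinEquiv).trans finSumFinEquiv).trans (finCongr hd')
  obtain ⟨Θ, hΘ⟩ := exists_equiv_blockDiagonal_submatrix_eq_kronecker_one (R := ℂ)
    (P := Fin p) (Q := Fin q) (V := Fin d) (fun i : Fin k => (i : ℕ) < a)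
    (Fintype.equivOfCardEq (by simp only [Fintype.card_prod, Fintype.card_fin, hA, hm]))
    (Fintype.equivOfCardEq (by simp only [Fintype.card_prod, Fintype.card_fin, hB, hn])) E
  refine ⟨a, Θ.trans (finProdFinEquiv.prodCongr (Equiv.refl _)),
    fun x y => (dilateSum x y (Fin m) (Fin n)).submatrix E.symm E.symm, fun x y => ?_⟩
  rw [← hΘ, blockDiagonal_ite_lKron_rKron, submatrix_submatrix]
  congr 1 <;> funext i <;> simp [Prod.map]

theorem exists_blockDiagonal_submatrix_mem_range_lKron {p q p' q' k : ℕ} (hpq : p.Coprime q)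
    (hk : p' * q' = p * q * k) (hk' : q' ≤ k) (hq' : 0 < q') :
    ∃ (a : ℕ) (Θ : Fin (p' * q') ≃ Fin (p * q) × Fin k), ∀ x y,
      (blockDiagonal fun i : Fin k => if (i : ℕ) < a then lKron p q x else rKron p q y).submatrix
        Θ Θ ∈ (lKron p' q').range := by
  obtain ⟨a, Θ, ρ, hΘ⟩ := exists_blockDiagonal_lKron_rKron_eq_kronecker_one hpq hk hk' hq'
  refine ⟨a, finProdFinEquiv.symm.trans Θ, fun x y => ⟨ρ x y, ?_⟩⟩
  change (ρ x y ⊗ₖ 1).submatrix _ _ = _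
  rw [← hΘ, submatrix_submatrix]
  rfl

theorem exists_blockDiagonal_submatrix_mem_range_rKron {p q p' q' k : ℕ} (hpq : p.Coprime q)
    (hk : p' * q' = p * q * k) (hk' : p' ≤ k) (hp' : 0 < p') :
    ∃ (a : ℕ) (Θ : Fin (p' * q') ≃ Fin (p * q) × Fin k), ∀ x y,
      (blockDiagonal fun i : Fin k => if (i : ℕ) < a then lKron p q x else rKron p q y).submatrix
        Θ Θ ∈ (rKron p' q').range := by
  obtain ⟨a, Θ, ρ, hΘ⟩ :=
    exists_blockDiagonal_lKron_rKron_eq_kronecker_one hpq (by rw [mul_comm, hk]) hk' hp'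
  refine ⟨a, finProdFinEquiv.symm.trans ((Equiv.prodComm _ _).trans Θ), fun x y => ⟨ρ x y, ?_⟩⟩
  change (1 ⊗ₖ ρ x y).submatrix _ _ = _
  rw [← kronecker_one_submatrix_prodComm, ← hΘ, submatrix_submatrix, submatrix_submatrix]
  rfl

end Reindex

section Unitary

theorem CStarRing.norm_lt_two_of_star_mul_self_eq {A : Type*} [CStarAlgebra A] {x : A}
    (hx : star x * x = (2 : ℂ) • 1) : ‖x‖ < 2 := by
  have h1 : ‖(1 : A)‖ ≤ 1 := by
    nontriviality A
    simp
  have h2 : ‖x‖ * ‖x‖ ≤ 2 := by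
    rw [← CStarRing.norm_star_mul_self, hx, norm_smul]
    simpa using h1
  nlinarith [norm_nonneg x]

theorem Unitary.joined_one_of_mul_self_eq_one {A : Type*} [CStarAlgebra A] {u : unitary A}
    (hu : u * u = 1) : Joined 1 u := by
  have hs : star (u : A) = u := by
    rw [← Unitary.coe_star, Unitary.star_eq_inv, inv_eq_of_mul_eq_one_right hu]
  have hu' : (u * u : A) = 1 := congrArg Subtype.val hu
  -- `i • 1` is at distance `√2` from both `1` and `u`
  let v : unitary A := ⟨Complex.I • 1, by simp [Unitary.mem_iff, smul_smul]⟩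
  refine (Unitary.joined 1 v ?_).trans (Unitary.joined v u ?_) <;>
    refine CStarRing.norm_lt_two_of_star_mul_self_eq ?_ <;>
    simp only [v, OneMemClass.coe_one, star_sub, star_smul, star_one, hs, Complex.star_def,
      Complex.conj_I, mul_sub, sub_mul, smul_mul_assoc, mul_smul_comm, one_mul, mul_one, hu'] <;>
    linear_combination (norm := module) -(Complex.I_sq • (1 : A))

theorem Joined.exists_mem_unitary_continuousMap {A : Type*} [TopologicalSpace A] [Monoid A]
    [StarMul A] [ContinuousMul A] [ContinuousStar A] {u : unitary A} (h : Joined 1 u) :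
    ∃ U ∈ unitary C(unitInterval, A), U 0 = 1 ∧ U 1 = u := by
  refine ⟨⟨fun t => (h.somePath t : A), by fun_prop⟩, ?_, by simp, by simp⟩
  rw [Unitary.mem_iff]
  constructor <;> ext1 t <;> simp

variable {n R : Type*} [Fintype n] [DecidableEq n] [CommSemiring R] [StarRing R]

theorem Matrix.trace_mul_mul_star_of_mem_unitary {u : Matrix n n R}
    (hu : u ∈ unitary (Matrix n n R)) (A : Matrix n n R) : (u * A * star u).trace = A.trace := by
  rw [trace_mul_cycle, Unitary.star_mul_self_of_mem hu, one_mul]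

variable (R) in
def permUnitary : Equiv.Perm n →* unitary (Matrix n n R) :=
  Matrix.permMatrixHom.codRestrict _ fun σ => by
    simp [Unitary.mem_iff, Matrix.star_eq_conjTranspose, ← Matrix.permMatrix_mul]

theorem permUnitary_mul_mul_star (π : Equiv.Perm n) (M : Matrix n n R) :
    (permUnitary R π : Matrix n n R) * M * star (permUnitary R π : Matrix n n R) =
      M.submatrix π.symm π.symm := by
  simp [permUnitary, Matrix.star_eq_conjTranspose, PEquiv.toMatrix_toPEquiv_mul,
    PEquiv.mul_toMatrix_toPEquiv]

theorem joined_one_permUnitary (π : Equiv.Perm n) : Joined 1 (permUnitary ℂ π) := by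
  induction π using Equiv.Perm.swap_induction_on with
  | one => rw [map_one]
  | swap_mul f x y _ ih =>
    rw [map_mul, ← one_mul 1]
    exact (Unitary.joined_one_of_mul_self_eq_one (by
      rw [← map_mul, Equiv.swap_mul_self, map_one])).mul ih

end Unitary

section Cdf

open ProbabilityTheory Set

theorem ProbabilityTheory.continuous_cdf (ν : Measure ℝ) [IsProbabilityMeasure ν]
    [NullSingletonClass ν] : Continuous (cdf ν) := by
  refine continuous_iff_continuousAt.2 fun x => continuousAt_iff_continuous_left'_right'.2
    ⟨?_, ((cdf ν).right_continuous x).mono Ioi_subset_Ici_self⟩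
  refine (cdf ν).mono.continuousWithinAt_Iio_iff_leftLim_eq.2
    (le_antisymm ((cdf ν).mono.leftLim_le le_rfl) ?_)
  have := (cdf ν).measure_singleton x
  rwa [measure_cdf, measure_singleton, eq_comm, ENNReal.ofReal_eq_zero, sub_nonpos] at this

variable (μ : Measure 𝕀) [IsProbabilityMeasure μ]

def cdfMap (t : 𝕀) : 𝕀 := ⟨μ.real (Iic t), measureReal_nonneg, measureReal_le_one⟩

theorem continuous_cdfMap [NullSingletonClass μ] : Continuous (cdfMap μ) := by
  have : NullSingletonClass (μ.map Subtype.val) := ⟨fun x => by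
    rw [Measure.map_apply measurable_subtype_coe (measurableSet_singleton x)]
    exact (subsingleton_singleton.preimage Subtype.val_injective).measure_zero μ⟩
  have : IsProbabilityMeasure (μ.map Subtype.val) :=
    Measure.isProbabilityMeasure_map (by fun_prop)
  refine continuous_induced_rng.2 ?_
  convert (continuous_cdf (μ.map Subtype.val)).comp continuous_subtype_val using 1
  funext t
  rw [Function.comp_apply, Function.comp_apply, unitInterval.cdf_eq_real]
  exact congrArg μ.real Icc_bot.symm

theorem strictMono_cdfMap (hμ : Faithful μ) : StrictMono (cdfMap μ) := by
  intro t t' htt'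
  rw [← Subtype.coe_lt_coe]
  change μ.real (Iic t) < μ.real (Iic t')
  rw [← Iic_union_Ioc_eq_Iic htt'.le,
    measureReal_union (Iic_disjoint_Ioc le_rfl) measurableSet_Ioc, lt_add_iff_pos_right]
  exact ENNReal.toReal_pos ((hμ _ isOpen_Ioo (nonempty_Ioo.2 htt')).trans_le
    (measure_mono Ioo_subset_Ioc_self)).ne' (measure_ne_top μ _)

theorem surjective_cdfMap [NullSingletonClass μ] : Function.Surjective (cdfMap μ) := by
  have h0 : cdfMap μ 0 = 0 := by
    ext; simp [cdfMap, show Iic (0 : 𝕀) = {0} from Iic_bot, Measure.real]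
  have h1 : cdfMap μ 1 = 1 := by
    ext; simp [cdfMap, show Iic (1 : 𝕀) = univ from Iic_top]
  intro s
  exact intermediate_value_univ 0 1 (continuous_cdfMap μ) (by rw [h0, h1]; exact s.2)

def cdfOrderIso (hμ : Faithful μ) [NullSingletonClass μ] : 𝕀 ≃o 𝕀 :=
  StrictMono.orderIsoOfSurjective _ (strictMono_cdfMap μ hμ) (surjective_cdfMap μ)

theorem measurePreserving_cdfOrderIso (hμ : Faithful μ) [NullSingletonClass μ] :
    MeasurePreserving (cdfOrderIso μ hμ) μ volume := by
  refine ⟨(continuous_cdfMap μ).measurable, Measure.ext_of_Iic _ _ fun s => ?_⟩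
  rw [Measure.map_apply (cdfOrderIso μ hμ).continuous.measurable measurableSet_Iic,
    OrderIso.preimage_Iic, unitInterval.volume_Iic]
  conv_rhs => rw [← (cdfOrderIso μ hμ).apply_symm_apply s]
  exact (ofReal_measureReal (measure_ne_top μ _)).symm

end Cdf

section Endpoints

open Set

def vee : C(𝕀, 𝕀) where
  toFun t := ⟨|2 * t - 1|, abs_nonneg _, abs_le.2 ⟨by linarith [t.2.1], by linarith [t.2.2]⟩⟩
  continuous_toFun := by fun_prop

theorem vee_zero : vee 0 = 1 := by ext; simp [vee]

theorem vee_one : vee 1 = 1 := by ext; norm_num [vee]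

theorem surjective_vee : Function.Surjective vee := fun s =>
  ⟨⟨(1 + s) / 2, by linarith [s.2.1], by linarith [s.2.2]⟩,
    by ext; simp [vee, mul_div_cancel₀, abs_of_nonneg s.2.1]⟩

theorem measurePreserving_vee : MeasurePreserving vee volume volume := by
  refine ⟨vee.continuous.measurable, Measure.ext_of_Iic _ _ fun s => ?_⟩
  have hs := s.2
  let a : 𝕀 := ⟨(1 - s) / 2, by linarith [hs.2], by linarith [hs.1]⟩
  let b : 𝕀 := ⟨(1 + s) / 2, by linarith [hs.1], by linarith [hs.2]⟩
  have : vee ⁻¹' Iic s = Icc a b := by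
    ext t
    simp only [mem_preimage, mem_Iic, mem_Icc, ← Subtype.coe_le_coe, vee, ContinuousMap.coe_mk,
      abs_le, a, b]
    constructor <;> intro h <;> constructor <;> linarith [h.1, h.2]
  rw [Measure.map_apply vee.continuous.measurable measurableSet_Iic, this,
    unitInterval.volume_Icc, unitInterval.volume_Iic]
  congr 1
  simp only [a, b]
  ring

theorem exists_measurePreserving_endpoints {e₀ e₁ : 𝕀} (h₀ : e₀ = 0 ∨ e₀ = 1)
    (h₁ : e₁ = 0 ∨ e₁ = 1) :
    ∃ ψ : C(𝕀, 𝕀), Function.Surjective ψ ∧ MeasurePreserving ψ volume volume ∧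
      ψ 0 = e₀ ∧ ψ 1 = e₁ := by
  let σ : C(𝕀, 𝕀) := ⟨unitInterval.symm, unitInterval.continuous_symm⟩
  have hσ : MeasurePreserving σ volume volume := unitInterval.measurePreserving_symm
  rcases h₀ with rfl | rfl <;> rcases h₁ with rfl | rfl
  · exact ⟨σ.comp vee, unitInterval.symm_bijective.surjective.comp surjective_vee,
      hσ.comp measurePreserving_vee, by simp [σ, vee_zero], by simp [σ, vee_one]⟩
  · exact ⟨ContinuousMap.id 𝕀, Function.surjective_id, MeasurePreserving.id _, rfl, rfl⟩
  · exact ⟨σ, unitInterval.symm_bijective.surjective, hσ, by simp [σ], by simp [σ]⟩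
  · exact ⟨vee, surjective_vee, measurePreserving_vee, vee_zero, vee_one⟩

theorem exists_surjective_measurePreserving_endpoints (μ ν : Measure 𝕀) [IsProbabilityMeasure μ]
    [IsProbabilityMeasure ν] [NullSingletonClass μ] [NullSingletonClass ν] (hμ : Faithful μ)
    (hν : Faithful ν) {e₀ e₁ : 𝕀} (h₀ : e₀ = 0 ∨ e₀ = 1) (h₁ : e₁ = 0 ∨ e₁ = 1) :
    ∃ ξ : C(𝕀, 𝕀), Function.Surjective ξ ∧ MeasurePreserving ξ μ ν ∧ ξ 0 = e₀ ∧ ξ 1 = e₁ := by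
  obtain ⟨ψ, hψ, hψν, hψ₀, hψ₁⟩ := exists_measurePreserving_endpoints h₀ h₁
  set F := cdfOrderIso μ hμ
  set G := cdfOrderIso ν hν
  have hG : MeasurePreserving G.symm volume ν :=
    (measurePreserving_cdfOrderIso ν hν).symm G.toHomeomorph.toMeasurableEquiv
  have hfix : ∀ x : 𝕀, x = 0 ∨ x = 1 → G.symm x = x := by
    rintro x (rfl | rfl)
    exacts [G.symm.map_bot, G.symm.map_top]
  refine ⟨⟨G.symm ∘ ψ ∘ F, G.symm.continuous.comp (ψ.continuous.comp F.continuous)⟩,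
    G.symm.surjective.comp (hψ.comp F.surjective),
    hG.comp (hψν.comp (measurePreserving_cdfOrderIso μ hμ)), ?_, ?_⟩
  · simp [show F 0 = 0 from F.map_bot, hψ₀, hfix e₀ h₀]
  · simp [show F 1 = 1 from F.map_top, hψ₁, hfix e₁ h₁]

end Endpoints

section BlockDiagonal

open Matrix

variable {X Y n K N : Type*} [TopologicalSpace X] [TopologicalSpace Y] [Fintype n]
  [DecidableEq n] [Fintype K] [DecidableEq K] [Fintype N] [DecidableEq N]

def blockDiagonalComp (ξ : K → C(X, Y)) (Θ : N ≃ n × K) :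
    C(Y, Matrix n n ℂ) →⋆ₐ[ℂ] C(X, Matrix N N ℂ) where
  toFun f := ⟨fun t => (blockDiagonal fun i => f (ξ i t)).submatrix Θ Θ, by fun_prop⟩
  map_one' := by ext1 t; simp [← Pi.one_def]
  map_mul' f g := by ext1 t; simp [blockDiagonal_mul, submatrix_mul_equiv]
  map_zero' := by ext1 t; simp [← Pi.zero_def]
  map_add' f g := by
    ext1 t
    exact congrArg (·.submatrix Θ Θ) (blockDiagonal_add (fun i => f (ξ i t)) fun i => g (ξ i t))
  commutes' r := by
    simp only [Algebra.algebraMap_eq_smul_one]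
    ext1 t
    change (blockDiagonal (r • 1)).submatrix Θ Θ = r • 1
    rw [blockDiagonal_smul, blockDiagonal_one, ← submatrix_one_equiv Θ]
    rfl
  map_star' f := by ext1 t; simp [star_eq_conjTranspose, blockDiagonal_conjTranspose]

theorem blockDiagonalComp_apply (ξ : K → C(X, Y)) (Θ : N ≃ n × K) (f : C(Y, Matrix n n ℂ))
    (t : X) : blockDiagonalComp ξ Θ f t = (blockDiagonal fun i => f (ξ i t)).submatrix Θ Θ :=
  rfl

theorem blockDiagonalComp_injective {ξ : K → C(X, Y)} (Θ : N ≃ n × K) {i : K}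
    (hi : Function.Surjective (ξ i)) : Function.Injective (blockDiagonalComp ξ Θ) := by
  intro f g hfg
  ext s a b
  obtain ⟨t, rfl⟩ := hi s
  simpa [blockDiagonalComp_apply] using
    congr_fun (congr_fun (DFunLike.congr_fun hfg t) (Θ.symm (a, i))) (Θ.symm (b, i))

theorem trace_blockDiagonalComp_apply (ξ : K → C(X, Y)) (Θ : N ≃ n × K) (f : C(Y, Matrix n n ℂ))
    (t : X) : (blockDiagonalComp ξ Θ f t).trace = ∑ i, (f (ξ i t)).trace := by
  rw [blockDiagonalComp_apply, ← trace_blockDiagonal]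
  exact Θ.sum_comp fun j => blockDiagonal (fun i => f (ξ i t)) j j

theorem integral_trace_blockDiagonalComp [MeasurableSpace X] [OpensMeasurableSpace X] [CompactSpace X]
    [MeasurableSpace Y] [BorelSpace Y] {μ : Measure X} {ν : Measure Y} [IsFiniteMeasure μ]
    {ξ : K → C(X, Y)} (hξ : ∀ i, MeasurePreserving (ξ i) μ ν) (Θ : N ≃ n × K)
    (f : C(Y, Matrix n n ℂ)) :
    ∫ t, (blockDiagonalComp ξ Θ f t).trace ∂μ = Fintype.card K * ∫ s, (f s).trace ∂ν := by
  have h : ∀ i, ∫ t, (f (ξ i t)).trace ∂μ = ∫ s, (f s).trace ∂ν := fun i => by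
    rw [← (hξ i).map_eq, integral_map (ξ i).continuous.aemeasurable
      f.continuous.matrix_trace.aestronglyMeasurable]
  simp_rw [trace_blockDiagonalComp_apply]
  rw [integral_finsetSum _ fun i _ => (show Continuous fun t => (f (ξ i t)).trace by fun_prop
    ).integrable_of_hasCompactSupport (HasCompactSupport.of_compactSpace _)]
  simp [h]

end BlockDiagonal

theorem exists_embedding_of_blocks (σ τ : Measure 𝕀) [IsProbabilityMeasure σ] {p q p' q' k : ℕ}
    (hk : p' * q' = p * q * k) (c₀ c₁ : Fin k → Prop) [DecidablePred c₀] [DecidablePred c₁]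
    (Θ₀ Θ₁ : Fin (p' * q') ≃ Fin (p * q) × Fin k)
    (hΘ₀ : ∀ x y, (Matrix.blockDiagonal fun i => if c₀ i then lKron p q x else rKron p q y
      ).submatrix Θ₀ Θ₀ ∈ (lKron p' q').range)
    (hΘ₁ : ∀ x y, (Matrix.blockDiagonal fun i => if c₁ i then lKron p q x else rKron p q y
      ).submatrix Θ₁ Θ₁ ∈ (rKron p' q').range)
    (ξ : Fin k → C(𝕀, 𝕀)) (hξ : ∀ i, MeasurePreserving (ξ i) σ τ)
    (hξ₀ : ∀ i, ξ i 0 = if c₀ i then 0 else 1) (hξ₁ : ∀ i, ξ i 1 = if c₁ i then 0 else 1)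
    (i₀ : Fin k) (hi₀ : Function.Surjective (ξ i₀)) :
    ∃ φ : ↥(Zpq p q) →⋆ₐ[ℂ] ↥(Zpq p' q'), Function.Injective φ ∧
      ∀ f : ↥(Zpq p q), trInt (p' * q') σ ↑(φ f) = trInt (p * q) τ ↑f := by
  obtain ⟨U, hU, hU₀, hU₁⟩ :=
    (joined_one_permUnitary (Θ₀.trans Θ₁.symm)).exists_mem_unitary_continuousMap
  set Φ := (Unitary.conjStarAlgAut ℂ _ ⟨U, hU⟩).toStarAlgHom.comp (blockDiagonalComp ξ Θ₀)
  have hΦ : ∀ f t, Φ f t =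
      U t * (Matrix.blockDiagonal fun i => f (ξ i t)).submatrix Θ₀ Θ₀ * star (U t) :=
    fun f t => rfl
  have hmem : ∀ f ∈ Zpq p q, Φ f ∈ Zpq p' q' := by
    rintro f ⟨⟨x, hx⟩, ⟨y, hy⟩⟩
    have hblocks (c : Fin k → Prop) [DecidablePred c] (t : 𝕀)
        (ht : ∀ i, ξ i t = if c i then 0 else 1) :
        (fun i => f (ξ i t)) = fun i => if c i then lKron p q x else rKron p q y := by
      funext i
      rw [ht]
      split_ifs
      exacts [hx.symm, hy.symm]
    refine ⟨?_, ?_⟩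
    · change Φ f 0 ∈ (lKron p' q').range
      simpa [hΦ, hU₀, hblocks c₀ 0 hξ₀] using hΘ₀ x y
    · change Φ f 1 ∈ (rKron p' q').range
      rw [hΦ, hU₁, permUnitary_mul_mul_star, Matrix.submatrix_submatrix, hblocks c₁ 1 hξ₁]
      convert hΘ₁ x y using 3 <;> ext <;> simp
  have hΦinj : Function.Injective Φ :=
    (Unitary.conjStarAlgAut ℂ _ ⟨U, hU⟩).injective.comp (blockDiagonalComp_injective Θ₀ hi₀)
  refine ⟨(Φ.comp (Zpq p q).subtype).codRestrict _ fun f => hmem f f.2,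
    fun f g h => Subtype.ext (hΦinj (congrArg Subtype.val h)), fun f => ?_⟩
  have hk₀ : (k : ℂ) ≠ 0 := Nat.cast_ne_zero.2 (Fin.pos i₀).ne'
  change ∫ t, (Φ f t).trace / ((p' * q' : ℕ) : ℂ) ∂σ = ∫ t, (f.1 t).trace / ((p * q : ℕ) : ℂ) ∂τ
  have htr : ∀ t A, (U t * A * star (U t)).trace = A.trace := fun t =>
    Matrix.trace_mul_mul_star_of_mem_unitary (Unitary.map_mem (evalHom _ t) hU)
  simp_rw [hΦ, htr, ← blockDiagonalComp_apply]
  rw [integral_div, integral_div, integral_trace_blockDiagonalComp hξ, Fintype.card_fin, hk]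
  push_cast
  field_simp

theorem statement13_general (p q : ℕ) (hpq : Nat.Coprime p q) :
    ∃ M : ℕ, ∀ p' q' : ℕ, 1 ≤ p' → 1 ≤ q' → Nat.Coprime p' q' → M < p' → M < q' →
      p * q ∣ p' * q' →
      ∀ (τ σ : Measure 𝕀), IsProbabilityMeasure τ → IsProbabilityMeasure σ →
        τ.Regular → σ.Regular → Faithful τ → Diffuse τ → Faithful σ → Diffuse σ →
        ∃ φ : ↥(Zpq p q) →⋆ₐ[ℂ] ↥(Zpq p' q'), Function.Injective φ ∧
          ∀ f : ↥(Zpq p q), trInt (p' * q') σ ↑(φ f) = trInt (p * q) τ ↑f := by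
  refine ⟨p * q, fun p' q' hp' hq' _ hp'M hq'M ⟨k, hk⟩ τ σ _ _ _ _ hτ hτd hσ hσd => ?_⟩
  have : NullSingletonClass τ := ⟨hτd⟩
  have : NullSingletonClass σ := ⟨hσd⟩
  have hq'k : q' < k := Nat.lt_of_mul_lt_mul_left (hk ▸ Nat.mul_lt_mul_of_pos_right hp'M hq')
  have hp'k : p' < k := Nat.lt_of_mul_lt_mul_left
    ((mul_comm q' p').trans hk ▸ Nat.mul_lt_mul_of_pos_right hq'M hp')
  obtain ⟨a₀, Θ₀, hΘ₀⟩ := exists_blockDiagonal_submatrix_mem_range_lKron hpq hk hq'k.le hq'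
  obtain ⟨a₁, Θ₁, hΘ₁⟩ := exists_blockDiagonal_submatrix_mem_range_rKron hpq hk hp'k.le hp'
  have hends (a : ℕ) (i : Fin k) : (if (i : ℕ) < a then 0 else 1 : 𝕀) = 0 ∨
      (if (i : ℕ) < a then 0 else 1 : 𝕀) = 1 := by
    split_ifs <;> simp
  choose ξ hξ hξσ hξ₀ hξ₁ using fun i => exists_surjective_measurePreserving_endpoints σ τ hσ hτ
    (hends a₀ i) (hends a₁ i)
  exact exists_embedding_of_blocks σ τ hk _ _ Θ₀ Θ₁ hΘ₀ hΘ₁ ξ hξσ hξ₀ hξ₁ ⟨0, by omega⟩ (hξ _)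

/-- For co-prime `p, q` there exists `M(p,q)` such that whenever `p', q'`
are co-prime, both exceed `M(p,q)`, and `pq ∣ p'q'`, every `⟨Z_{p,q}, τ⟩` embeds into
`⟨Z_{p',q'}, σ⟩` for all faithful diffuse measures τ, σ. -/
theorem statement13 (p q : ℕ) (hp : 1 ≤ p) (hq : 1 ≤ q) (hpq : Nat.Coprime p q) :
    ∃ M : ℕ, ∀ p' q' : ℕ, 1 ≤ p' → 1 ≤ q' → Nat.Coprime p' q' → M < p' → M < q' →
      p * q ∣ p' * q' →
      ∀ (τ σ : Measure 𝕀), IsProbabilityMeasure τ → IsProbabilityMeasure σ →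
        τ.Regular → σ.Regular → Faithful τ → Diffuse τ → Faithful σ → Diffuse σ →
        ∃ φ : ↥(Zpq p q) →⋆ₐ[ℂ] ↥(Zpq p' q'), Function.Injective φ ∧
          ∀ f : ↥(Zpq p q), trInt (p' * q') σ ↑(φ f) = trInt (p * q) τ ↑f :=
  statement13_general p q hpq
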